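/- With π* : q_+ → p̃_+, i' : sl(n+2,ℝ) → sl(n+3,ℝ) as in the Fefferman-type construction, and β : sl(n+3,ℝ) → sl(n+2,ℝ) the linear map obtained by deleting the third row and summing the second and third columns, one has β([π*(Z), i'(W)]) = [Z, W] for all Z ∈ q_+ and all W ∈ sl(n+2,ℝ). -/

import Mathlib

open Matrix

def femIdx (n : ℕ) : Fin (n + 3) → Fin (n + 2) := fun r =>
  if _ : r.val < 2 then ⟨r.val, by omega⟩
  else if _ : r.val = 2 then ⟨1, by omega⟩
  else ⟨r.val - 1, by have := r.isLt; omega⟩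

def iPrimeMat (n : ℕ) (X : Matrix (Fin (n + 2)) (Fin (n + 2)) ℝ) :
    Matrix (Fin (n + 3)) (Fin (n + 3)) ℝ :=
  Matrix.of fun r s =>
    if s.val = 2 then (0 : ℝ) else X (femIdx n r) (femIdx n s)

def piStar (n : ℕ) (Z : Matrix (Fin (n + 2)) (Fin (n + 2)) ℝ) :
    Matrix (Fin (n + 3)) (Fin (n + 3)) ℝ :=
  Matrix.of fun r s =>
    if h : r.val < 2 ∧ 2 ≤ s.val then
      Z ⟨r.val, by omega⟩ ⟨s.val - 1, by have := s.isLt; omega⟩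
    else 0

/-- `β : sl(n+3,ℝ) → gl(n+2,ℝ)`, deleting the third row and summing the second and
third columns. -/
def betaMat (n : ℕ) (Y : Matrix (Fin (n + 3)) (Fin (n + 3)) ℝ) :
    Matrix (Fin (n + 2)) (Fin (n + 2)) ℝ :=
  Matrix.of fun r s =>
    Y (if _ : r.val < 2 then ⟨r.val, by omega⟩ else ⟨r.val + 1, by have := r.isLt; omega⟩)
      (if _ : s.val < 2 then ⟨s.val, by omega⟩ else ⟨s.val + 1, by have := s.isLt; omega⟩)
    + (if s.val = 1 then
        Y (if _ : r.val < 2 then ⟨r.val, by omega⟩ else ⟨r.val + 1, by have := r.isLt; omega⟩)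
          ⟨2, by omega⟩
       else 0)

/-- The embedding `Fin (n+2) → Fin (n+3)` skipping the index `2`. -/
def emb (n : ℕ) (r : Fin (n + 2)) : Fin (n + 3) :=
  if _ : r.val < 2 then ⟨r.val, by omega⟩ else ⟨r.val + 1, by have := r.isLt; omega⟩

lemma emb_val (n : ℕ) (r : Fin (n + 2)) :
    (emb n r).val = if r.val < 2 then r.val else r.val + 1 := by
  unfold emb; split <;> simp_all

lemma emb_val_ne_two (n : ℕ) (r : Fin (n + 2)) : (emb n r).val ≠ 2 := by
  rw [emb_val]; split <;> omega

lemma femIdx_val (n : ℕ) (k : Fin (n + 3)) :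
    (femIdx n k).val = if k.val < 2 then k.val else if k.val = 2 then 1 else k.val - 1 := by
  unfold femIdx
  rcases Nat.lt_or_ge k.val 2 with h | h
  · simp [h]
  · rcases eq_or_ne k.val 2 with h2 | h2 <;>
      simp [h2, Nat.not_lt.2 h, Nat.lt_irrefl]

lemma femIdx_emb (n : ℕ) (r : Fin (n + 2)) : femIdx n (emb n r) = r := by
  apply Fin.ext
  rw [femIdx_val, emb_val]
  split_ifs <;> omega

lemma femIdx_succ (n : ℕ) (j : Fin (n + 2)) (hj : 1 ≤ j.val) :
    femIdx n j.succ = j := by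
  apply Fin.ext
  rw [femIdx_val]
  simp only [Fin.val_succ]
  split_ifs <;> omega

lemma femIdx_zero (n : ℕ) : femIdx n (0 : Fin (n + 3)) = 0 := by
  apply Fin.ext; rw [femIdx_val]; simp

lemma femIdx_one (n : ℕ) : femIdx n (Fin.succ 0 : Fin (n + 3)) = 1 := by
  apply Fin.ext; rw [femIdx_val]; simp [Fin.val_succ]

lemma betaMat_apply (n : ℕ) (Y : Matrix (Fin (n + 3)) (Fin (n + 3)) ℝ)
    (r s : Fin (n + 2)) :
    betaMat n Y r s
      = Y (emb n r) (emb n s) + (if s.val = 1 then Y (emb n r) ⟨2, by omega⟩ else 0) := rfl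

section lems
variable (n : ℕ) (Z W : Matrix (Fin (n + 2)) (Fin (n + 2)) ℝ)
  (hZ : ∀ r s : Fin (n + 2), ¬(r.val < 2 ∧ r.val < s.val) → Z r s = 0)

include hZ in
lemma lemAB (r s : Fin (n + 2)) :
    (piStar n Z * iPrimeMat n W) (emb n r) (emb n s) = (Z * W) r s := by
  rw [Matrix.mul_apply, Matrix.mul_apply]
  rcases Nat.lt_or_ge r.val 2 with hr | hr
  · have her : (emb n r).val = r.val := by rw [emb_val]; simp [hr]
    rw [Fin.sum_univ_succ]
    have h0 : piStar n Z (emb n r) 0 * iPrimeMat n W 0 (emb n s) = 0 := by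
      simp [piStar]
    rw [h0, zero_add]
    refine Finset.sum_congr rfl fun j _ => ?_
    have hjs : (j.succ : Fin (n + 3)).val = j.val + 1 := rfl
    rcases Nat.eq_zero_or_pos j.val with hj | hj
    · have : piStar n Z (emb n r) j.succ = 0 := by
        simp [piStar, hjs, hj]
      rw [this, zero_mul, hZ r j (by omega), zero_mul]
    · have hp : piStar n Z (emb n r) j.succ = Z r j := by
        simp only [piStar, Matrix.of_apply]
        rw [dif_pos (by omega)]
        congr 1 <;> apply Fin.ext <;> simp [her, hjs]
      have hi : iPrimeMat n W j.succ (emb n s) = W j s := by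
        simp only [iPrimeMat, Matrix.of_apply]
        rw [if_neg (emb_val_ne_two n s), femIdx_emb, femIdx_succ n j hj]
      rw [hp, hi]
  · have her : ¬ (emb n r).val < 2 := by rw [emb_val]; split <;> omega
    rw [Finset.sum_eq_zero fun k _ => by
          simp only [piStar, Matrix.of_apply]; rw [dif_neg (fun h => her h.1), zero_mul],
        Finset.sum_eq_zero fun j _ => by rw [hZ r j (by omega), zero_mul]]

lemma lemAB2 (r : Fin (n + 2)) :
    (piStar n Z * iPrimeMat n W) (emb n r) ⟨2, by omega⟩ = 0 := by
  rw [Matrix.mul_apply]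
  exact Finset.sum_eq_zero fun k _ => by simp [iPrimeMat]

end lems

section lems2
variable (n : ℕ) (Z W : Matrix (Fin (n + 2)) (Fin (n + 2)) ℝ)
  (hZ : ∀ r s : Fin (n + 2), ¬(r.val < 2 ∧ r.val < s.val) → Z r s = 0)

include hZ in
lemma lemBA' (r s : Fin (n + 2)) :
    (iPrimeMat n W * piStar n Z) (emb n r) (emb n s)
      = (W * Z) r s - (if s.val = 1 then W r 0 * Z 0 1 else 0) := by
  have hi0 : iPrimeMat n W (emb n r) 0 = W r 0 := by
    simp only [iPrimeMat, Matrix.of_apply]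
    rw [if_neg (by simp), femIdx_emb, femIdx_zero]
  have hi1 : iPrimeMat n W (emb n r) (Fin.succ 0) = W r 1 := by
    simp only [iPrimeMat, Matrix.of_apply]
    rw [if_neg (by simp [Fin.val_succ]), femIdx_emb, femIdx_one]
  rw [Matrix.mul_apply, Matrix.mul_apply]
  rcases Nat.lt_or_ge s.val 2 with hs | hs
  · have hes : (emb n s).val = s.val := by rw [emb_val]; simp [hs]
    have hL : ∀ k : Fin (n + 3), iPrimeMat n W (emb n r) k * piStar n Z k (emb n s) = 0 := by
      intro k
      have : piStar n Z k (emb n s) = 0 := by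
        simp only [piStar, Matrix.of_apply]
        rw [dif_neg (by omega)]
      rw [this, mul_zero]
    rw [Finset.sum_eq_zero fun k _ => hL k]
    rcases Nat.lt_or_ge s.val 1 with hs0 | hs1
    · have hs0' : ¬ s.val = 1 := by omega
      rw [if_neg hs0', sub_zero,
        Finset.sum_eq_zero fun j _ => by rw [hZ j s (by omega), mul_zero]]
    · have hs1' : s.val = 1 := by omega
      have hseq : s = 1 := by apply Fin.ext; simpa using hs1'
      have hR : ∑ j : Fin (n + 2), W r j * Z j s = W r 0 * Z 0 1 := by
        rw [Fin.sum_univ_succ]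
        rw [Finset.sum_eq_zero fun j _ => by
          rw [hZ j.succ s (by simp only [Fin.val_succ]; omega), mul_zero]]
        rw [add_zero, hseq]
      rw [hR, if_pos hs1']
      ring
  · have hes : (emb n s).val = s.val + 1 := by rw [emb_val]; simp [Nat.not_lt.2 hs]
    have hs1' : ¬ s.val = 1 := by omega
    have key : ∀ k : Fin (n + 3),
        iPrimeMat n W (emb n r) k * piStar n Z k (emb n s)
          = iPrimeMat n W (emb n r) k
            * (if _ : k.val < 2 then Z ⟨k.val, by omega⟩ s else 0) := by
      intro k
      congr 1
      simp only [piStar, Matrix.of_apply]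
      by_cases hk : k.val < 2
      · rw [dif_pos ⟨hk, by omega⟩, dif_pos hk]
        congr 1
        apply Fin.ext; simp [hes]
      · rw [dif_neg (by omega), dif_neg hk]
    have hL : ∑ k : Fin (n + 3), iPrimeMat n W (emb n r) k * piStar n Z k (emb n s)
        = W r 0 * Z 0 s + W r 1 * Z 1 s := by
      rw [Finset.sum_congr rfl fun k _ => key k, Fin.sum_univ_succ, Fin.sum_univ_succ]
      rw [Finset.sum_eq_zero fun j _ => by
        rw [dif_neg (by simp only [Fin.val_succ]; omega :
          ¬ ((j.succ.succ : Fin (n + 3)).val < 2)), mul_zero]]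
      rw [add_zero, hi0, hi1,
        dif_pos (by simp : ((0 : Fin (n + 3))).val < 2),
        dif_pos (by simp [Fin.val_succ] : ((Fin.succ 0 : Fin (n + 3))).val < 2)]
      have e0 : (⟨((0 : Fin (n + 3))).val,
          by simp only [Fin.val_zero]; omega⟩ : Fin (n + 2)) = 0 := by
        apply Fin.ext; simp
      have e1 : (⟨((Fin.succ 0 : Fin (n + 3))).val,
          by simp only [Fin.val_succ, Fin.val_zero]; omega⟩ : Fin (n + 2)) = 1 := by
        apply Fin.ext; simp [Fin.val_succ]
      rw [e0, e1]
    have hR : ∑ j : Fin (n + 2), W r j * Z j s = W r 0 * Z 0 s + W r 1 * Z 1 s := by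
      rw [Fin.sum_univ_succ, Fin.sum_univ_succ]
      rw [Finset.sum_eq_zero fun j _ => by
        rw [hZ j.succ.succ s (by simp only [Fin.val_succ]; omega), mul_zero]]
      have e1 : (Fin.succ (0 : Fin (n + 1)) : Fin (n + 2)) = 1 := by
        apply Fin.ext; simp
      rw [add_zero, e1]
    rw [hL, hR, if_neg hs1', sub_zero]

include hZ in
lemma lemBA2 (r : Fin (n + 2)) :
    (iPrimeMat n W * piStar n Z) (emb n r) ⟨2, by omega⟩ = W r 0 * Z 0 1 := by
  have hi0 : iPrimeMat n W (emb n r) 0 = W r 0 := by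
    simp only [iPrimeMat, Matrix.of_apply]
    rw [if_neg (by simp), femIdx_emb, femIdx_zero]
  rw [Matrix.mul_apply, Fin.sum_univ_succ, Fin.sum_univ_succ]
  rw [Finset.sum_eq_zero (fun j _ => by
    have : piStar n Z (j.succ.succ : Fin (n + 3)) ⟨2, by omega⟩ = 0 := by
      simp only [piStar, Matrix.of_apply]
      rw [dif_neg (by simp only [Fin.val_succ]; omega)]
    rw [this, mul_zero])]
  have hp0 : piStar n Z (0 : Fin (n + 3)) ⟨2, by omega⟩ = Z 0 1 := by
    simp only [piStar, Matrix.of_apply]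
    rw [dif_pos (by simp)]
    congr 1 <;> (apply Fin.ext; simp)
  have hp1 : piStar n Z (Fin.succ 0 : Fin (n + 3)) ⟨2, by omega⟩ = 0 := by
    simp only [piStar, Matrix.of_apply]
    rw [dif_pos (by simp [Fin.val_succ])]
    apply hZ
    intro h
    simp only [Fin.val_succ] at h
    omega
  rw [hp0, hp1, mul_zero, add_zero, add_zero, hi0]

end lems2

/-- `β([π*(Z), i'(W)]) = [Z, W]` for all `Z ∈ q₊` and all `W ∈ sl(n+2,ℝ)`. -/
theorem stmt4 (n : ℕ) (Z W : Matrix (Fin (n + 2)) (Fin (n + 2)) ℝ)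
    (hZ : ∀ r s : Fin (n + 2), ¬(r.val < 2 ∧ r.val < s.val) → Z r s = 0)
    (hW : W.trace = 0) :
    betaMat n (piStar n Z * iPrimeMat n W - iPrimeMat n W * piStar n Z)
      = Z * W - W * Z := by
  ext r s
  rw [betaMat_apply, Matrix.sub_apply, Matrix.sub_apply,
    lemAB n Z W hZ r s, lemBA' n Z W hZ r s, Matrix.sub_apply]
  by_cases hs : s.val = 1
  · rw [if_pos hs, if_pos hs, lemAB2 n Z W r, lemBA2 n Z W hZ r]
    ring
  · rw [if_neg hs, if_neg hs]
    ring
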